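/- arXiv:0708.1528 — 6 statements merged into one kernel-verified Lean document; each statement's English description precedes it below -/
import Mathlib

section
/- For fixed nonnegative integers n, u, v with u+v ≤ n and positive integers k, l, the sum ∑_{s=0}^{u} (-1)^{s+v} C(n+2k-1, n-v-s) C(n+2l-1, v+s) · ((v+s)!/v!) · ((n-v-s)!/(n-v-u)!) · C(2k+v+s-1, s) · C(2l+n-v-s-1, u-s) equals (-1)^v · (n+2k-1)!(n+2l-1)! / ((2k+v-1)! v! (n-v-u)! (2l+n-u-v-1)! u!) · ∑_{s=0}^{u} (-1)^s C(u,s), and in particular it is zero unless u = 0. -/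
open Finset

/-
Writing each product of binomial coefficients `C(N, a) * C(N - a, b)` as the trinomial coefficient
`N! / (a! b! (N-a-b)!)`, all factorials depending on `s` except `s!` and `(u-s)!` cancel. The `s`-th
summand is therefore a constant multiple of `(-1)^s C(u, s)`, and the alternating sum of a row of
Pascal's triangle vanishes for `u ≠ 0`.
-/

theorem Nat.cast_choose_mul_cast_choose_sub (K : Type*) [Field K] [CharZero K] {N a b : ℕ}
    (h : a + b ≤ N) :
    (N.choose a : K) * ((N - a).choose b) =
      N.factorial / (a.factorial * b.factorial * (N - a - b).factorial) := by
  rw [Nat.cast_choose K (by omega : a ≤ N), Nat.cast_choose K (by omega : b ≤ N - a)]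
  have : ((N - a).factorial : K) ≠ 0 := Nat.cast_ne_zero.mpr (Nat.factorial_ne_zero _)
  field_simp

theorem alternating_sum_range_choose_of_ne_zero (R : Type*) [CommRing R] {u : ℕ} (hu : u ≠ 0) :
    ∑ s ∈ range (u + 1), (-1 : R) ^ s * (u.choose s : R) = 0 := by
  simpa using congrArg (Int.cast : ℤ → R) (Int.alternating_sum_range_choose_of_ne hu)

theorem rankinCohen_summand_eq (n u v k l s : ℕ) (hk : 0 < k) (hl : 0 < l) (huv : u + v ≤ n)
    (hs : s ≤ u) :
    (-1 : ℚ) ^ (s + v) * (Nat.choose (n + 2*k - 1) (n - v - s)) *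
          (Nat.choose (n + 2*l - 1) (v + s)) *
          ((Nat.factorial (v + s) : ℚ) / (Nat.factorial v)) *
          ((Nat.factorial (n - v - s) : ℚ) / (Nat.factorial (n - v - u))) *
          (Nat.choose (2*k + v + s - 1) s) *
          (Nat.choose (2*l + n - v - s - 1) (u - s))
      = (-1 : ℚ) ^ v *
          ((Nat.factorial (n + 2*k - 1) : ℚ) * (Nat.factorial (n + 2*l - 1)) /
            ((Nat.factorial (2*k + v - 1) : ℚ) * (Nat.factorial v) *
              (Nat.factorial (n - v - u)) * (Nat.factorial (2*l + n - u - v - 1)) *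
              (Nat.factorial u))) *
          ((-1 : ℚ) ^ s * (Nat.choose u s)) := by
  have hN : 2*k + v + s - 1 = n + 2*k - 1 - (n - v - s) := by omega
  have hM : 2*l + n - v - s - 1 = n + 2*l - 1 - (v + s) := by omega
  have hNrest : n + 2*k - 1 - (n - v - s) - s = 2*k + v - 1 := by omega
  have hMrest : n + 2*l - 1 - (v + s) - (u - s) = 2*l + n - u - v - 1 := by omega
  have hN_trinomial := Nat.cast_choose_mul_cast_choose_sub ℚ
    (by omega : (n - v - s) + s ≤ n + 2*k - 1)
  have hM_trinomial := Nat.cast_choose_mul_cast_choose_sub ℚ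
    (by omega : (v + s) + (u - s) ≤ n + 2*l - 1)
  rw [hNrest, ← hN] at hN_trinomial
  rw [hMrest, ← hM] at hM_trinomial
  rw [Nat.cast_choose ℚ hs]
  calc _ = (-1 : ℚ) ^ (s + v) * ((Nat.choose (n + 2*k - 1) (n - v - s)) *
          (Nat.choose (2*k + v + s - 1) s)) * ((Nat.choose (n + 2*l - 1) (v + s)) *
          (Nat.choose (2*l + n - v - s - 1) (u - s))) *
          ((Nat.factorial (v + s) : ℚ) / (Nat.factorial v)) *
          ((Nat.factorial (n - v - s) : ℚ) / (Nat.factorial (n - v - u))) := by ring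
    _ = _ := by
      rw [hN_trinomial, hM_trinomial, pow_add]
      field_simp

/-- The combinatorial identity underlying the expression of Rankin–Cohen brackets
via the Maass operator: the coefficient of `X̃^v f · X̃^{n-u-v} g` vanishes unless `u = 0`. -/
theorem stmt0 (n u v k l : ℕ) (hk : 0 < k) (hl : 0 < l) (huv : u + v ≤ n) :
    (∑ s ∈ range (u + 1),
        (-1 : ℚ) ^ (s + v) * (Nat.choose (n + 2*k - 1) (n - v - s)) *
          (Nat.choose (n + 2*l - 1) (v + s)) *
          ((Nat.factorial (v + s) : ℚ) / (Nat.factorial v)) *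
          ((Nat.factorial (n - v - s) : ℚ) / (Nat.factorial (n - v - u))) *
          (Nat.choose (2*k + v + s - 1) s) *
          (Nat.choose (2*l + n - v - s - 1) (u - s)))
      = (-1 : ℚ) ^ v *
          ((Nat.factorial (n + 2*k - 1) : ℚ) * (Nat.factorial (n + 2*l - 1)) /
            ((Nat.factorial (2*k + v - 1) : ℚ) * (Nat.factorial v) *
              (Nat.factorial (n - v - u)) * (Nat.factorial (2*l + n - u - v - 1)) *
              (Nat.factorial u))) *
          (∑ s ∈ range (u + 1), (-1 : ℚ) ^ s * (Nat.choose u s)) ∧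
    (u ≠ 0 →
      (∑ s ∈ range (u + 1),
          (-1 : ℚ) ^ (s + v) * (Nat.choose (n + 2*k - 1) (n - v - s)) *
            (Nat.choose (n + 2*l - 1) (v + s)) *
            ((Nat.factorial (v + s) : ℚ) / (Nat.factorial v)) *
            ((Nat.factorial (n - v - s) : ℚ) / (Nat.factorial (n - v - u))) *
            (Nat.choose (2*k + v + s - 1) s) *
            (Nat.choose (2*l + n - v - s - 1) (u - s))) = 0) := by
  have factored : (∑ s ∈ range (u + 1),
        (-1 : ℚ) ^ (s + v) * (Nat.choose (n + 2*k - 1) (n - v - s)) *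
          (Nat.choose (n + 2*l - 1) (v + s)) *
          ((Nat.factorial (v + s) : ℚ) / (Nat.factorial v)) *
          ((Nat.factorial (n - v - s) : ℚ) / (Nat.factorial (n - v - u))) *
          (Nat.choose (2*k + v + s - 1) s) *
          (Nat.choose (2*l + n - v - s - 1) (u - s)))
      = (-1 : ℚ) ^ v *
          ((Nat.factorial (n + 2*k - 1) : ℚ) * (Nat.factorial (n + 2*l - 1)) /
            ((Nat.factorial (2*k + v - 1) : ℚ) * (Nat.factorial v) *
              (Nat.factorial (n - v - u)) * (Nat.factorial (2*l + n - u - v - 1)) *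
              (Nat.factorial u))) *
          (∑ s ∈ range (u + 1), (-1 : ℚ) ^ s * (Nat.choose u s)) := by
    rw [mul_sum]
    exact sum_congr rfl fun s hs ↦
      rankinCohen_summand_eq n u v k l s hk hl huv (Nat.lt_succ_iff.mp (mem_range.mp hs))
  refine ⟨factored, fun hu ↦ ?_⟩
  rw [factored, alternating_sum_range_choose_of_ne_zero ℚ hu, mul_zero]
end

section
/- Let k, l, m be positive integers and n ≥ 3 an integer. Then the 2×2 determinant det( [C(n,1)/((2k+2l)_{n-1}(2m)_1), C(n,n-1)/((2k)_{n-1}(2l+2m)_1)], [C(n,2)/((2k+2l)_{n-2}(2m)_2), C(n,n-2)/((2k)_{n-2}(2l+2m)_2)] ) is nonzero, where (α)_j = α(α+1)⋯(α+j−1) is the Pochhammer symbol. Specifically, it equals C(n,n-1)C(n,n-2) · [1/((2k+2l)_{n-2}(2m)(2k)_{n-2}(2l+2m))] · [−(2l)² − 2l(2k+2m+n−1)] / [(2k+2l+n−2)(2l+2m+1)(2m+1)(2k+n−2)], which is strictly negative. -/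
open Finset

/-- The ascending Pochhammer symbol `(x)_j = x(x+1)⋯(x+j−1)`. -/
def poch (x : ℝ) (j : ℕ) : ℝ := ∏ i ∈ Finset.range j, (x + i)

lemma poch_pos {x : ℝ} (hx : 0 < x) (j : ℕ) : 0 < poch x j :=
  Finset.prod_pos fun i _ => by positivity

lemma poch_succ (x : ℝ) (j : ℕ) : poch x (j + 1) = poch x j * (x + j) :=
  Finset.prod_range_succ _ _

lemma poch_one (x : ℝ) : poch x 1 = x := by
  simp [poch]

lemma poch_two (x : ℝ) : poch x 2 = x * (x + 1) := by
  simp [poch, Finset.prod_range_succ]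

lemma det_poch_eq {a b c : ℝ} (ha : 0 < a) (hb : 0 < b) (hc : 0 < c) {n : ℕ} (hn : 2 ≤ n)
    (s t : ℝ) :
    !![s / (poch (a + b) (n - 1) * poch c 1), s / (poch a (n - 1) * poch (b + c) 1);
       t / (poch (a + b) (n - 2) * poch c 2), t / (poch a (n - 2) * poch (b + c) 2)].det
      = s * t * (1 / (poch (a + b) (n - 2) * c * poch a (n - 2) * (b + c))) *
          ((-b ^ 2 - b * (a + c + n - 1)) /
            ((a + b + n - 2) * (b + c + 1) * (c + 1) * (a + n - 2))) := by
  obtain ⟨j, rfl⟩ : ∃ j, n = j + 2 := ⟨n - 2, by omega⟩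
  have hP := poch_pos (add_pos ha hb) j
  have hQ := poch_pos ha j
  have hab : a + b + ((j : ℝ) + 2) - 2 ≠ 0 := by ring_nf; positivity
  have ha' : a + ((j : ℝ) + 2) - 2 ≠ 0 := by ring_nf; positivity
  rw [Matrix.det_fin_two_of, poch_one, poch_one, poch_two, poch_two,
    show j + 2 - 1 = j + 1 by omega, Nat.add_sub_cancel, poch_succ, poch_succ]
  push_cast
  field_simp
  ring

lemma det_poch_neg {a b c : ℝ} (ha : 0 < a) (hb : 0 < b) (hc : 0 < c) {n : ℕ} (hn : 2 ≤ n)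
    {s t : ℝ} (hs : 0 < s) (ht : 0 < t) :
    !![s / (poch (a + b) (n - 1) * poch c 1), s / (poch a (n - 1) * poch (b + c) 1);
       t / (poch (a + b) (n - 2) * poch c 2), t / (poch a (n - 2) * poch (b + c) 2)].det < 0 := by
  have hn' : (2 : ℝ) ≤ n := by exact_mod_cast hn
  have hP := poch_pos (add_pos ha hb) (n - 2)
  have hQ := poch_pos ha (n - 2)
  have hab : 0 < a + b + n - 2 := by linarith
  have ha' : 0 < a + n - 2 := by linarith
  rw [det_poch_eq ha hb hc hn]
  refine mul_neg_of_pos_of_neg (by positivity) (div_neg_of_neg_of_pos ?_ (by positivity))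
  nlinarith

/-- The 2×2 determinant appearing in the uniqueness argument for the coefficients `A_n`
is given by an explicit negative expression, hence is nonzero. -/
theorem stmt6 (k l m : ℕ) (hk : 0 < k) (hl : 0 < l) (hm : 0 < m) (n : ℕ) (hn : 3 ≤ n) :
    Matrix.det
        !![(Nat.choose n 1 : ℝ) / (poch (2*k + 2*l) (n - 1) * poch (2*m) 1),
             (Nat.choose n (n - 1) : ℝ) / (poch (2*k) (n - 1) * poch (2*l + 2*m) 1);
           (Nat.choose n 2 : ℝ) / (poch (2*k + 2*l) (n - 2) * poch (2*m) 2),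
             (Nat.choose n (n - 2) : ℝ) / (poch (2*k) (n - 2) * poch (2*l + 2*m) 2)]
      = (Nat.choose n (n - 1) : ℝ) * (Nat.choose n (n - 2)) *
          (1 / (poch (2*k + 2*l) (n - 2) * (2*m) * poch (2*k) (n - 2) * (2*l + 2*m))) *
          ((-(2*l : ℝ)^2 - (2*l) * (2*k + 2*m + n - 1)) /
            ((2*k + 2*l + n - 2) * (2*l + 2*m + 1) * (2*m + 1) * (2*k + n - 2))) ∧
    Matrix.det
        !![(Nat.choose n 1 : ℝ) / (poch (2*k + 2*l) (n - 1) * poch (2*m) 1),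
             (Nat.choose n (n - 1) : ℝ) / (poch (2*k) (n - 1) * poch (2*l + 2*m) 1);
           (Nat.choose n 2 : ℝ) / (poch (2*k + 2*l) (n - 2) * poch (2*m) 2),
             (Nat.choose n (n - 2) : ℝ) / (poch (2*k) (n - 2) * poch (2*l + 2*m) 2)]
      < 0 := by
  have ha : (0 : ℝ) < 2 * k := by positivity
  have hb : (0 : ℝ) < 2 * l := by positivity
  have hc : (0 : ℝ) < 2 * m := by positivity
  have hn2 : 2 ≤ n := by omega
  have hs : (0 : ℝ) < Nat.choose n (n - 1) := by exact_mod_cast Nat.choose_pos (by omega)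
  have ht : (0 : ℝ) < Nat.choose n (n - 2) := by exact_mod_cast Nat.choose_pos (by omega)
  rw [← Nat.choose_symm (by omega : 1 ≤ n), ← Nat.choose_symm hn2]
  exact ⟨det_poch_eq ha hb hc hn2 _ _, det_poch_neg ha hb hc hn2 hs ht⟩
end

section
/- Suppose a function Ã defined on pairs of positive reals satisfies: (i) Ã(2k+2l, 2m) = Ã(2k, 2l+2m) for all positive reals k, l, m, and (ii) Ã(2k+2l,2m)·(1/(2m+1) − 1/(2k+2l+2m+1)) = Ã(2k,2l+2m)·(1/(2l+2m+1) − 1/(2k+2l+2m+1)) + Ã(2l,2m)·(1/(2m+1) − 1/(2l+2m+1)) for all positive reals k, l, m. Then Ã is constant on pairs of positive reals (x,y) with x, y > 2 in its domain, i.e., Ã(2l,2m) = Ã(2k+2l,2m) = Ã(2k,2l+2m) for all k, l, m > 0. -/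
lemma one_div_sub_one_div_shift_ne_zero {l : ℝ} (hl : l ≠ 0) (m : ℝ) :
    (1 / (2*m + 1) : ℂ) - 1 / (2*l + 2*m + 1) ≠ 0 := by
  rw [sub_ne_zero, one_div, one_div, Ne, inv_inj]
  intro h
  exact hl (by exact_mod_cast (by linear_combination -h / 2 : (l : ℂ) = 0))

/-- The two functional equations force `Ã` to be constant:
`Ã(2l,2m) = Ã(2k+2l,2m) = Ã(2k,2l+2m)` for all positive reals `k, l, m`. -/
theorem stmt9 (A : ℝ → ℝ → ℂ)
    (h2 : ∀ k l m : ℝ, 0 < k → 0 < l → 0 < m →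
      A (2*k + 2*l) (2*m) = A (2*k) (2*l + 2*m))
    (h1 : ∀ k l m : ℝ, 0 < k → 0 < l → 0 < m →
      A (2*k + 2*l) (2*m) * ((1 / (2*m + 1) : ℂ) - 1 / (2*k + 2*l + 2*m + 1))
        = A (2*k) (2*l + 2*m) * ((1 / (2*l + 2*m + 1) : ℂ) - 1 / (2*k + 2*l + 2*m + 1))
          + A (2*l) (2*m) * ((1 / (2*m + 1) : ℂ) - 1 / (2*l + 2*m + 1))) :
    ∀ k l m : ℝ, 0 < k → 0 < l → 0 < m →
      A (2*l) (2*m) = A (2*k + 2*l) (2*m) ∧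
        A (2*k + 2*l) (2*m) = A (2*k) (2*l + 2*m) := by
  intro k l m hk hl hm
  have hshift := h2 k l m hk hl hm
  refine ⟨?_, hshift⟩
  -- Substituting (i) into (ii), the two terms carrying `1 / (2k+2l+2m+1)` cancel.
  have hcancel : (A (2*l) (2*m) - A (2*k + 2*l) (2*m)) *
      ((1 / (2*m + 1) : ℂ) - 1 / (2*l + 2*m + 1)) = 0 := by
    linear_combination -h1 k l m hk hl hm +
      ((1 / (2*l + 2*m + 1) : ℂ) - 1 / (2*k + 2*l + 2*m + 1)) * hshift
  exact sub_eq_zero.mp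
    ((mul_eq_zero.mp hcancel).resolve_right (one_div_sub_one_div_shift_ne_zero hl.ne' m))
end

section
/- Let f = ∑ αᵢ qⁱ and g = ∑ βᵢ qⁱ be formal power series with α₀ = β₀ = 1, and define the nth derivative operator D = q·d/dq. Suppose k, l, m are positive integers with m ≥ k and l ≥ 1, and α₁, β₁, γ₁ are complex numbers satisfying the system A_{n1}α₁ + A_{n2}β₁ + A_{n3}γ₁ = 0 for n = 1, 2, 3, where A_{n1} = (−1)ⁿ(2m)_n − (−1)ⁿ(2l+2m)_n, A_{n2} = (−1)ⁿ(2m)_n − (2k)_n, A_{n3} = (2k+2l)_n − (2k)_n (Pochhammer symbols). Then α₁ = β₁ = γ₁ = 0. -/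
/-!
The system is homogeneous, so it suffices that its coefficient matrix is nonsingular. In the
variables `a = 2m`, `c = 2k`, `s = 2l` its determinant is `-s²` times a polynomial with
nonnegative coefficients in `a, c, s`, which is positive as soon as `a + c > 0`.
-/

open Finset

def pochC (x : ℂ) (n : ℕ) : ℂ := ∏ i ∈ Finset.range n, (x + i)

/-- Row `(A_{n1}, A_{n2}, A_{n3})` of the system, written with `a = 2m`, `c = 2k`, `s = 2l`. -/
def coeffRow (a c s : ℂ) (n : ℕ) : Fin 3 → ℂ :=
  ![(-1) ^ n * pochC a n - (-1) ^ n * pochC (s + a) n,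
    (-1) ^ n * pochC a n - pochC c n,
    pochC (c + s) n - pochC c n]

def coeffMatrix (a c s : ℂ) : Matrix (Fin 3) (Fin 3) ℂ :=
  Matrix.of ![coeffRow a c s 1, coeffRow a c s 2, coeffRow a c s 3]

theorem det_coeffMatrix (a c s : ℂ) :
    (coeffMatrix a c s).det = -s ^ 2 * (6 * (a ^ 2 + c ^ 2 + s * (a + c))
      + (a + c) * (a + c + s) * (a + c + 2 * s) * (a + c + s + 4)) := by
  simp only [Matrix.det_fin_three, coeffMatrix, coeffRow, pochC, Matrix.of_apply,
    Matrix.cons_val', Matrix.cons_val_zero, Matrix.cons_val_one, Matrix.cons_val,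
    Matrix.cons_val_fin_one, prod_range_succ, prod_range_zero, Nat.cast_ofNat, Nat.cast_one,
    Nat.cast_zero]
  ring

theorem det_coeffMatrix_natCast_ne_zero {a c s : ℕ} (hs : s ≠ 0) (hac : a + c ≠ 0) :
    (coeffMatrix a c s).det ≠ 0 := by
  have hN : 6 * (a ^ 2 + c ^ 2 + s * (a + c))
      + (a + c) * (a + c + s) * (a + c + 2 * s) * (a + c + s + 4) ≠ 0 := by
    obtain ⟨u, hu⟩ : ∃ u, a + c = u + 1 := Nat.exists_eq_succ_of_ne_zero hac
    rw [hu]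
    positivity
  rw [det_coeffMatrix]
  exact mul_ne_zero (by simpa using hs) (by exact_mod_cast hN)

theorem stmt11_general (k l m : ℕ) (hk : 0 < k) (hl : 1 ≤ l)
    (α₁ β₁ γ₁ : ℂ)
    (hsys : ∀ n : ℕ, n = 1 ∨ n = 2 ∨ n = 3 →
      ((-1 : ℂ) ^ n * pochC (2*m) n - (-1 : ℂ) ^ n * pochC (2*l + 2*m) n) * α₁
        + ((-1 : ℂ) ^ n * pochC (2*m) n - pochC (2*k) n) * β₁
        + (pochC (2*k + 2*l) n - pochC (2*k) n) * γ₁ = 0) :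
    α₁ = 0 ∧ β₁ = 0 ∧ γ₁ = 0 := by
  set M := coeffMatrix (2 * m) (2 * k) (2 * l)
  have hsol : M.mulVec ![α₁, β₁, γ₁] = 0 := by
    ext i
    fin_cases i <;>
      simp only [M, coeffMatrix, coeffRow, Matrix.mulVec, dotProduct, Fin.sum_univ_three,
        Matrix.of_apply, Matrix.cons_val', Matrix.cons_val_zero, Matrix.cons_val_one,
        Matrix.cons_val, Matrix.cons_val_fin_one, Pi.zero_apply, Fin.zero_eta, Fin.mk_one,
        Fin.reduceFinMk, Fin.isValue]
    exacts [hsys 1 (by norm_num), hsys 2 (by norm_num), hsys 3 (by norm_num)]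
  have hdet : M.det ≠ 0 := by
    simpa [M] using det_coeffMatrix_natCast_ne_zero (a := 2 * m) (c := 2 * k) (s := 2 * l)
      (by omega) (by omega)
  have hzero := Matrix.eq_zero_of_mulVec_eq_zero hdet hsol
  exact ⟨congrFun hzero 0, congrFun hzero 1, congrFun hzero 2⟩

/-- If `m ≥ k ≥ 1`, `l ≥ 1`, and `α₁, β₁, γ₁` satisfy the linear system
`A_{n1}α₁ + A_{n2}β₁ + A_{n3}γ₁ = 0` for `n = 1, 2, 3` with
`A_{n1} = (−1)ⁿ(2m)_n − (−1)ⁿ(2l+2m)_n`, `A_{n2} = (−1)ⁿ(2m)_n − (2k)_n`,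
`A_{n3} = (2k+2l)_n − (2k)_n`, then `α₁ = β₁ = γ₁ = 0`. -/
theorem stmt11 (k l m : ℕ) (hk : 0 < k) (hl : 1 ≤ l) (hm : k ≤ m)
    (α₁ β₁ γ₁ : ℂ)
    (hsys : ∀ n : ℕ, n = 1 ∨ n = 2 ∨ n = 3 →
      ((-1 : ℂ) ^ n * pochC (2*m) n - (-1 : ℂ) ^ n * pochC (2*l + 2*m) n) * α₁
        + ((-1 : ℂ) ^ n * pochC (2*m) n - pochC (2*k) n) * β₁
        + (pochC (2*k + 2*l) n - pochC (2*k) n) * γ₁ = 0) :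
    α₁ = 0 ∧ β₁ = 0 ∧ γ₁ = 0 :=
  stmt11_general k l m hk hl α₁ β₁ γ₁ hsys
end

section
/- With the coefficients A_{ij} (1 ≤ i,j ≤ 3) given by A_{11}=2l, A_{12}=−2k−2m, A_{13}=2l, A_{21}=−(4m+2l+1)(2l), A_{22}=(2m−2k)(2m+2k+1), A_{23}=(4k+2l+1)(2l), A_{31}=(2l)³+3(2m+1)(2l)²+(3(2m)²+6(2m)+2)(2l), A_{32}=−2m(2m+1)(2m+2)−2k(2k+1)(2k+2), A_{33}=(2l)³+3(2k+1)(2l)²+(3(2k)²+6(2k)+2)(2l), the determinant det(A_{ij}) equals (2l)²·{−6(k+l+m+1)(2m−2k)² + (2k+2l+2m+1)[−(2k+2m)(6k+6l+2m)−12k](2m−2k) − (4k+4l+4m+2)(2k+2m)(2k+2l)(4k+2l+3)}, and this is strictly negative whenever k, m are positive integers with m ≥ k and l ≥ 1 is an integer. -/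
/-!
Fully expanded, the determinant is `(2l)²` times a sum of three terms. When `0 < k ≤ m` and
`0 < l`, the first two are `≤ 0`, each being the factor `2m - 2k ≥ 0` (squared in the first)
times a negative coefficient, and the third is strictly negative.
-/

namespace DetSign

variable {R : Type*}

section CommRing

variable [CommRing R]

/-- The matrix `(A_{ij})` of the statement. -/
def coeffMatrix (k l m : R) : Matrix (Fin 3) (Fin 3) R :=
  !![(2*l), -(2*k) - 2*m, 2*l;
     -(4*m + 2*l + 1) * (2*l), (2*m - 2*k) * (2*m + 2*k + 1), (4*k + 2*l + 1) * (2*l);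
     (2*l)^3 + 3*(2*m + 1)*(2*l)^2 + (3*(2*m)^2 + 6*(2*m) + 2)*(2*l),
       -(2*m)*(2*m + 1)*(2*m + 2) - (2*k)*(2*k + 1)*(2*k + 2),
       (2*l)^3 + 3*(2*k + 1)*(2*l)^2 + (3*(2*k)^2 + 6*(2*k) + 2)*(2*l)]

/-- The expression in braces in the formula for `det (A_{ij})`. -/
def bracedFactor (k l m : R) : R :=
  -(6*(k + l + m + 1)) * (2*m - 2*k)^2
    + (2*k + 2*l + 2*m + 1) * (-((2*k + 2*m) * (6*k + 6*l + 2*m)) - 12*k) * (2*m - 2*k)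
    - (4*k + 4*l + 4*m + 2) * (2*k + 2*m) * (2*k + 2*l) * (4*k + 2*l + 3)

theorem det_coeffMatrix (k l m : R) :
    (coeffMatrix k l m).det = (2*l)^2 * bracedFactor k l m := by
  simp only [coeffMatrix, bracedFactor, Matrix.det_fin_three, Matrix.of_apply, Matrix.cons_val',
    Matrix.cons_val_zero, Matrix.cons_val_fin_one, Matrix.cons_val_one, Matrix.cons_val]
  ring

end CommRing

variable [CommRing R] [LinearOrder R] [IsStrictOrderedRing R]

theorem bracedFactor_neg {k l m : R} (hk : 0 < k) (hl : 0 < l) (hkm : k ≤ m) :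
    bracedFactor k l m < 0 := by
  have hgap : 0 ≤ 2*m - 2*k := by linarith
  have hm : 0 < m := hk.trans_le hkm
  have hfirst : -(6*(k + l + m + 1)) * (2*m - 2*k)^2 ≤ 0 :=
    mul_nonpos_of_nonpos_of_nonneg (by linarith) (sq_nonneg _)
  have hsecond :
      (2*k + 2*l + 2*m + 1) * (-((2*k + 2*m) * (6*k + 6*l + 2*m)) - 12*k) * (2*m - 2*k) ≤ 0 := by
    refine mul_nonpos_of_nonpos_of_nonneg (mul_nonpos_of_nonneg_of_nonpos (by linarith) ?_) hgap
    have : 0 < (2*k + 2*m) * (6*k + 6*l + 2*m) := by positivity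
    linarith
  have hthird : 0 < (4*k + 4*l + 4*m + 2) * (2*k + 2*m) * (2*k + 2*l) * (4*k + 2*l + 3) := by
    positivity
  rw [bracedFactor]
  linarith

theorem det_coeffMatrix_neg {k l m : R} (hk : 0 < k) (hl : 0 < l) (hkm : k ≤ m) :
    (coeffMatrix k l m).det < 0 := by
  rw [det_coeffMatrix]
  exact mul_neg_of_pos_of_neg (by positivity) (bracedFactor_neg hk hl hkm)

end DetSign

theorem stmt12_general (k l m : ℤ) (hk : 1 ≤ k) (hl : 1 ≤ l) (hmk : k ≤ m) :
    Matrix.det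
        !![(2*(l:ℝ)), -(2*(k:ℝ)) - 2*m, 2*(l:ℝ);
           -(4*(m:ℝ) + 2*l + 1) * (2*l), (2*(m:ℝ) - 2*k) * (2*m + 2*k + 1),
             (4*(k:ℝ) + 2*l + 1) * (2*l);
           (2*(l:ℝ))^3 + 3*(2*m + 1)*(2*l)^2 + (3*(2*m)^2 + 6*(2*m) + 2)*(2*l),
             -(2*(m:ℝ))*(2*m + 1)*(2*m + 2) - (2*k)*(2*k + 1)*(2*k + 2),
             (2*(l:ℝ))^3 + 3*(2*k + 1)*(2*l)^2 + (3*(2*k)^2 + 6*(2*k) + 2)*(2*l)]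
      = (2*(l:ℝ))^2 *
          (-(6*((k:ℝ) + l + m + 1)) * (2*m - 2*k)^2
            + (2*(k:ℝ) + 2*l + 2*m + 1) *
                (-((2*(k:ℝ) + 2*m) * (6*k + 6*l + 2*m)) - 12*k) * (2*m - 2*k)
            - (4*(k:ℝ) + 4*l + 4*m + 2) * (2*k + 2*m) * (2*k + 2*l) * (4*k + 2*l + 3)) ∧
    Matrix.det
        !![(2*(l:ℝ)), -(2*(k:ℝ)) - 2*m, 2*(l:ℝ);
           -(4*(m:ℝ) + 2*l + 1) * (2*l), (2*(m:ℝ) - 2*k) * (2*m + 2*k + 1),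
             (4*(k:ℝ) + 2*l + 1) * (2*l);
           (2*(l:ℝ))^3 + 3*(2*m + 1)*(2*l)^2 + (3*(2*m)^2 + 6*(2*m) + 2)*(2*l),
             -(2*(m:ℝ))*(2*m + 1)*(2*m + 2) - (2*k)*(2*k + 1)*(2*k + 2),
             (2*(l:ℝ))^3 + 3*(2*k + 1)*(2*l)^2 + (3*(2*k)^2 + 6*(2*k) + 2)*(2*l)]
      < 0 := by
  have hk' : (0 : ℝ) < k := by exact_mod_cast hk
  have hl' : (0 : ℝ) < l := by exact_mod_cast hl
  have hkm' : (k : ℝ) ≤ m := by exact_mod_cast hmk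
  exact ⟨DetSign.det_coeffMatrix (k : ℝ) l m, DetSign.det_coeffMatrix_neg hk' hl' hkm'⟩

/-- The determinant of the explicit 3×3 matrix `(A_{ij})` equals the stated
expression and is strictly negative for integers `k, m ≥ 1`, `l ≥ 1`, `m ≥ k`. -/
theorem stmt12 (k l m : ℤ) (hk : 1 ≤ k) (hm : 1 ≤ m) (hl : 1 ≤ l) (hmk : k ≤ m) :
    Matrix.det
        !![(2*(l:ℝ)), -(2*(k:ℝ)) - 2*m, 2*(l:ℝ);
           -(4*(m:ℝ) + 2*l + 1) * (2*l), (2*(m:ℝ) - 2*k) * (2*m + 2*k + 1),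
             (4*(k:ℝ) + 2*l + 1) * (2*l);
           (2*(l:ℝ))^3 + 3*(2*m + 1)*(2*l)^2 + (3*(2*m)^2 + 6*(2*m) + 2)*(2*l),
             -(2*(m:ℝ))*(2*m + 1)*(2*m + 2) - (2*k)*(2*k + 1)*(2*k + 2),
             (2*(l:ℝ))^3 + 3*(2*k + 1)*(2*l)^2 + (3*(2*k)^2 + 6*(2*k) + 2)*(2*l)]
      = (2*(l:ℝ))^2 *
          (-(6*((k:ℝ) + l + m + 1)) * (2*m - 2*k)^2
            + (2*(k:ℝ) + 2*l + 2*m + 1) *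
                (-((2*(k:ℝ) + 2*m) * (6*k + 6*l + 2*m)) - 12*k) * (2*m - 2*k)
            - (4*(k:ℝ) + 4*l + 4*m + 2) * (2*k + 2*m) * (2*k + 2*l) * (4*k + 2*l + 3)) ∧
    Matrix.det
        !![(2*(l:ℝ)), -(2*(k:ℝ)) - 2*m, 2*(l:ℝ);
           -(4*(m:ℝ) + 2*l + 1) * (2*l), (2*(m:ℝ) - 2*k) * (2*m + 2*k + 1),
             (4*(k:ℝ) + 2*l + 1) * (2*l);
           (2*(l:ℝ))^3 + 3*(2*m + 1)*(2*l)^2 + (3*(2*m)^2 + 6*(2*m) + 2)*(2*l),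
             -(2*(m:ℝ))*(2*m + 1)*(2*m + 2) - (2*k)*(2*k + 1)*(2*k + 2),
             (2*(l:ℝ))^3 + 3*(2*k + 1)*(2*l)^2 + (3*(2*k)^2 + 6*(2*k) + 2)*(2*l)]
      < 0 :=
  stmt12_general k l m hk hl hmk
end

section
/- Suppose nonzero formal q-expansions f = ∑_{i≥r} αᵢqⁱ, g = ∑_{i≥s} βᵢqⁱ, h = ∑_{i≥t} γᵢqⁱ with α_r, β_s, γ_t ≠ 0 and weights 2k, 2l, 2m satisfy, for n = 1, the lowest-order Rankin–Cohen identity [fg,h]_1 = [f,gh]_1 at the q^{r+s+t} coefficient. Then (k+m)s = l(r+t). -/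
theorem stmt18_general (k l m : ℕ)
    (r s t : ℕ) (α β γ : ℂ) (hα : α ≠ 0) (hβ : β ≠ 0) (hγ : γ ≠ 0)
    (hcoeff :
      -- coefficient of q^{r+s+t} in [fg, h]_1 = 2(k+l)·(fg)·Dh − 2m·D(fg)·h
      (2*(k:ℂ) + 2*l) * (α*β) * ((t:ℂ) * γ) - 2*(m:ℂ) * (((r:ℂ) + s) * (α*β)) * γ
        -- equals the coefficient of q^{r+s+t} in [f, gh]_1 = 2k·f·D(gh) − 2(l+m)·Df·(gh)
        = 2*(k:ℂ) * α * (((s:ℂ) + t) * (β*γ)) - (2*(l:ℂ) + 2*m) * ((r:ℂ) * α) * (β*γ)) :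
    (k + m) * s = l * (r + t) := by
  -- the two sides of `hcoeff` differ by `2αβγ (l(r+t) - (k+m)s)`
  have h : α * β * γ * ((k + m) * s) = α * β * γ * (l * (r + t)) := by
    linear_combination (-1/2 : ℂ) * hcoeff
  exact_mod_cast mul_left_cancel₀ (mul_ne_zero (mul_ne_zero hα hβ) hγ) h

/-- If `f, g, h` have leading terms `α_r q^r`, `β_s q^s`, `γ_t q^t` and the
`n = 1` Rankin–Cohen identity `[fg,h]_1 = [f,gh]_1` (with weights `2k+2l` and `2m`,
resp. `2k` and `2l+2m`, and `D = q d/dq`) holds at the `q^{r+s+t}` coefficient,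
then `(k+m)s = l(r+t)`. -/
theorem stmt18 (k l m : ℕ) (hk : 0 < k) (hl : 0 < l) (hm : 0 < m)
    (r s t : ℕ) (α β γ : ℂ) (hα : α ≠ 0) (hβ : β ≠ 0) (hγ : γ ≠ 0)
    (hcoeff :
      -- coefficient of q^{r+s+t} in [fg, h]_1 = 2(k+l)·(fg)·Dh − 2m·D(fg)·h
      (2*(k:ℂ) + 2*l) * (α*β) * ((t:ℂ) * γ) - 2*(m:ℂ) * (((r:ℂ) + s) * (α*β)) * γ
        -- equals the coefficient of q^{r+s+t} in [f, gh]_1 = 2k·f·D(gh) − 2(l+m)·Df·(gh)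
        = 2*(k:ℂ) * α * (((s:ℂ) + t) * (β*γ)) - (2*(l:ℂ) + 2*m) * ((r:ℂ) * α) * (β*γ)) :
    (k + m) * s = l * (r + t) :=
  stmt18_general k l m r s t α β γ hα hβ hγ hcoeff
end
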